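/- Let X be a t×d real matrix and M a full-rank d×d real matrix with t ≥ d, and let ε ∈ (0,1). If ‖(XM)ᵀ(XM) − I_d‖ ≤ max(ε, ε²), then (1 − ε)/s₁(M) ≤ s_d(X) and s₁(X) ≤ (1 + ε)/s_d(M), where s₁ ≥ ⋯ ≥ s_d denote singular values in non-increasing order. -/

import Mathlib

/-!
Put `A = X * M`. Since `⟪(Aᵀ A - 1) v, v⟫ = ‖A v‖² - ‖v‖²`, the hypothesis gives
`‖A v‖² ≤ (1 + ε)² ‖v‖²` and, when `ε ≤ 1`, `‖A v‖² ≥ (1 - ε) ‖v‖² ≥ (1 - ε)² ‖v‖²`;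
hence `(1 - ε) ‖v‖ ≤ ‖A v‖ ≤ (1 + ε) ‖v‖`.
Writing `u = M v` with `‖u‖ / s₁(M) ≤ ‖v‖ ≤ ‖u‖ / s_d(M)` transfers these bounds from `A` to `X`.
-/

open Matrix

/-- Operator norm (induced by Euclidean norms), which equals the largest singular value. -/
noncomputable def sMax {m n : Type*} [Fintype m] [Fintype n] [DecidableEq n]
    (A : Matrix m n ℝ) : ℝ :=
  ‖LinearMap.toContinuousLinearMap (Matrix.toEuclideanLin A)‖

/-- The smallest singular value of a tall matrix: the infimum of `‖A u‖` over unit vectors. -/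
noncomputable def sMin {m n : Type*} [Fintype m] [Fintype n] [DecidableEq n]
    (A : Matrix m n ℝ) : ℝ :=
  sInf {r : ℝ | ∃ u : EuclideanSpace ℝ n, ‖u‖ = 1 ∧ r = ‖Matrix.toEuclideanLin A u‖}

section SingularValueBounds

variable {l m n : Type*} [Fintype m] [Fintype n] [DecidableEq n]

lemma toEuclideanLin_mul_apply [DecidableEq m] (A : Matrix l m ℝ) (B : Matrix m n ℝ)
    (v : EuclideanSpace ℝ n) :
    toEuclideanLin (A * B) v = toEuclideanLin A (toEuclideanLin B v) := by
  simp

lemma toEuclideanLin_nonsing_inv_apply_apply {M : Matrix n n ℝ} (hM : IsUnit M.det)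
    (v : EuclideanSpace ℝ n) : toEuclideanLin M⁻¹ (toEuclideanLin M v) = v := by
  rw [← toEuclideanLin_mul_apply, nonsing_inv_mul M hM, toLpLin_one, LinearMap.id_apply]

lemma toEuclideanLin_apply_nonsing_inv_apply {M : Matrix n n ℝ} (hM : IsUnit M.det)
    (v : EuclideanSpace ℝ n) : toEuclideanLin M (toEuclideanLin M⁻¹ v) = v := by
  rw [← toEuclideanLin_mul_apply, mul_nonsing_inv M hM, toLpLin_one, LinearMap.id_apply]

lemma norm_toEuclideanLin_le (A : Matrix m n ℝ) (v : EuclideanSpace ℝ n) :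
    ‖toEuclideanLin A v‖ ≤ sMax A * ‖v‖ :=
  (LinearMap.toContinuousLinearMap (toEuclideanLin A)).le_opNorm v

lemma sMax_nonneg (A : Matrix m n ℝ) : 0 ≤ sMax A := norm_nonneg _

lemma sMax_le_of_norm_le {A : Matrix m n ℝ} {c : ℝ} (hc : 0 ≤ c)
    (h : ∀ v, ‖toEuclideanLin A v‖ ≤ c * ‖v‖) : sMax A ≤ c :=
  ContinuousLinearMap.opNorm_le_bound _ hc h

lemma sMax_eq_zero_of_isEmpty [IsEmpty n] (A : Matrix m n ℝ) : sMax A = 0 :=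
  le_antisymm (sMax_le_of_norm_le le_rfl fun v => by simp [Subsingleton.elim v 0]) (sMax_nonneg A)

lemma sMin_nonneg (A : Matrix m n ℝ) : 0 ≤ sMin A :=
  Real.sInf_nonneg (by rintro r ⟨u, -, rfl⟩; exact norm_nonneg _)

lemma sMin_le_norm (A : Matrix m n ℝ) {u : EuclideanSpace ℝ n} (hu : ‖u‖ = 1) :
    sMin A ≤ ‖toEuclideanLin A u‖ :=
  csInf_le ⟨0, by rintro r ⟨u, -, rfl⟩; exact norm_nonneg _⟩ ⟨u, hu, rfl⟩

lemma sMin_mul_norm_le (A : Matrix m n ℝ) (v : EuclideanSpace ℝ n) :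
    sMin A * ‖v‖ ≤ ‖toEuclideanLin A v‖ := by
  rcases eq_or_ne v 0 with rfl | hv
  · simp
  have hunit : ‖‖v‖⁻¹ • v‖ = 1 := by
    rw [norm_smul, norm_inv, norm_norm, inv_mul_cancel₀ (norm_ne_zero_iff.mpr hv)]
  have := sMin_le_norm A hunit
  rwa [map_smul, norm_smul, norm_inv, norm_norm, inv_mul_eq_div,
    le_div_iff₀ (norm_pos_iff.mpr hv)] at this

lemma le_sMin_of_mul_norm_le [Nonempty n] {A : Matrix m n ℝ} {c : ℝ}
    (h : ∀ v, c * ‖v‖ ≤ ‖toEuclideanLin A v‖) : c ≤ sMin A := by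
  refine le_csInf ⟨_, EuclideanSpace.single (Classical.arbitrary n) 1, by simp, rfl⟩ ?_
  rintro r ⟨u, hu, rfl⟩
  simpa [hu] using h u

lemma sMin_pos_of_isUnit_det [Nonempty n] {M : Matrix n n ℝ} (hM : IsUnit M.det) :
    0 < sMin M := by
  have hinv (v) : ‖v‖ ≤ sMax M⁻¹ * ‖toEuclideanLin M v‖ := by
    simpa [toEuclideanLin_nonsing_inv_apply_apply hM] using
      norm_toEuclideanLin_le M⁻¹ (toEuclideanLin M v)
  have hpos : 0 < sMax M⁻¹ := by
    set e := EuclideanSpace.single (Classical.arbitrary n) (1 : ℝ)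
    have he : ‖e‖ = 1 := by simp [e]
    have := hinv e
    by_contra! hle
    nlinarith [sMax_nonneg M⁻¹, norm_nonneg (toEuclideanLin M e)]
  refine (inv_pos.mpr hpos).trans_le (le_sMin_of_mul_norm_le fun v => ?_)
  rw [inv_mul_le_iff₀ hpos]
  exact hinv v

lemma sMin_le_sMax [Nonempty n] (A : Matrix m n ℝ) : sMin A ≤ sMax A := by
  have he : ‖EuclideanSpace.single (Classical.arbitrary n) (1 : ℝ)‖ = 1 := by simp
  simpa [he] using (sMin_le_norm A he).trans (norm_toEuclideanLin_le A _)

lemma div_sMax_le_sMin_of_mul_norm_le (X : Matrix m n ℝ) {M : Matrix n n ℝ} (hM : IsUnit M.det)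
    {a : ℝ} (h : ∀ w, a * ‖w‖ ≤ ‖toEuclideanLin (X * M) w‖) : a / sMax M ≤ sMin X := by
  rcases isEmpty_or_nonempty n with hn | hn
  · simp [sMax_eq_zero_of_isEmpty, sMin_nonneg]
  have hMpos : 0 < sMax M := (sMin_pos_of_isUnit_det hM).trans_le (sMin_le_sMax M)
  refine le_sMin_of_mul_norm_le fun u => ?_
  set w := toEuclideanLin M⁻¹ u
  have hu : ‖u‖ ≤ sMax M * ‖w‖ := by
    simpa [w, toEuclideanLin_apply_nonsing_inv_apply hM] using norm_toEuclideanLin_le M w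
  rcases le_or_gt a 0 with ha | ha
  · exact (mul_nonpos_of_nonpos_of_nonneg (div_nonpos_of_nonpos_of_nonneg ha hMpos.le)
      (norm_nonneg u)).trans (norm_nonneg _)
  calc a / sMax M * ‖u‖ ≤ a / sMax M * (sMax M * ‖w‖) := by gcongr
    _ = a * ‖w‖ := by field_simp
    _ ≤ ‖toEuclideanLin (X * M) w‖ := h w
    _ = ‖toEuclideanLin X u‖ := by
      rw [toEuclideanLin_mul_apply, toEuclideanLin_apply_nonsing_inv_apply hM]

lemma sMax_le_div_sMin_of_norm_le (X : Matrix m n ℝ) {M : Matrix n n ℝ} (hM : IsUnit M.det)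
    {b : ℝ} (hb : 0 ≤ b) (h : ∀ w, ‖toEuclideanLin (X * M) w‖ ≤ b * ‖w‖) :
    sMax X ≤ b / sMin M := by
  rcases isEmpty_or_nonempty n with hn | hn
  · simpa [sMax_eq_zero_of_isEmpty] using div_nonneg hb (sMin_nonneg M)
  have hMpos := sMin_pos_of_isUnit_det hM
  refine sMax_le_of_norm_le (by positivity) fun u => ?_
  set w := toEuclideanLin M⁻¹ u
  have hw : sMin M * ‖w‖ ≤ ‖u‖ := by
    simpa [w, toEuclideanLin_apply_nonsing_inv_apply hM] using sMin_mul_norm_le M w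
  calc ‖toEuclideanLin X u‖ = ‖toEuclideanLin (X * M) w‖ := by
        rw [toEuclideanLin_mul_apply, toEuclideanLin_apply_nonsing_inv_apply hM]
    _ ≤ b * ‖w‖ := h w
    _ = b / sMin M * (sMin M * ‖w‖) := by field_simp
    _ ≤ b / sMin M * ‖u‖ := by gcongr

lemma abs_norm_sq_sub_norm_sq_le [DecidableEq m] (A : Matrix m n ℝ) (v : EuclideanSpace ℝ n) :
    |‖toEuclideanLin A v‖ ^ 2 - ‖v‖ ^ 2| ≤ sMax (Aᵀ * A - 1) * ‖v‖ ^ 2 := by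
  have hquad : ‖toEuclideanLin A v‖ ^ 2 - ‖v‖ ^ 2 = inner ℝ (toEuclideanLin (Aᵀ * A - 1) v) v := by
    rw [← conjTranspose_eq_transpose_of_trivial, map_sub, LinearMap.sub_apply, inner_sub_left,
      toEuclideanLin_mul_apply, toEuclideanLin_conjTranspose_eq_adjoint,
      LinearMap.adjoint_inner_left, toLpLin_one, LinearMap.id_apply, real_inner_self_eq_norm_sq,
      real_inner_self_eq_norm_sq]
  calc |‖toEuclideanLin A v‖ ^ 2 - ‖v‖ ^ 2|
      ≤ ‖toEuclideanLin (Aᵀ * A - 1) v‖ * ‖v‖ := hquad ▸ abs_real_inner_le_norm _ _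
    _ ≤ sMax (Aᵀ * A - 1) * ‖v‖ * ‖v‖ := by gcongr; exact norm_toEuclideanLin_le _ v
    _ = sMax (Aᵀ * A - 1) * ‖v‖ ^ 2 := by ring

end SingularValueBounds

section NearIsometry

variable {m n : Type*} [Fintype m] [Fintype n] [DecidableEq m] [DecidableEq n]
  {A : Matrix m n ℝ} {ε : ℝ}

lemma norm_toEuclideanLin_le_one_add_mul (hε : 0 ≤ ε) (h : sMax (Aᵀ * A - 1) ≤ max ε (ε ^ 2))
    (v : EuclideanSpace ℝ n) : ‖toEuclideanLin A v‖ ≤ (1 + ε) * ‖v‖ := by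
  have hmax : max ε (ε ^ 2) ≤ 2 * ε + ε ^ 2 := max_le (by nlinarith) (by linarith)
  have hsq : ‖toEuclideanLin A v‖ ^ 2 ≤ ((1 + ε) * ‖v‖) ^ 2 := by
    have := (abs_le.mp (abs_norm_sq_sub_norm_sq_le A v)).2
    nlinarith [sq_nonneg ‖v‖]
  exact (pow_le_pow_iff_left₀ (norm_nonneg _) (by positivity) two_ne_zero).mp hsq

lemma one_sub_mul_le_norm_toEuclideanLin (hε : 0 ≤ ε) (h : sMax (Aᵀ * A - 1) ≤ max ε (ε ^ 2))
    (v : EuclideanSpace ℝ n) : (1 - ε) * ‖v‖ ≤ ‖toEuclideanLin A v‖ := by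
  rcases le_or_gt ε 1 with hε1 | hε1
  · have hmax : max ε (ε ^ 2) = ε := max_eq_left (by nlinarith)
    rw [hmax] at h
    have hsq : ((1 - ε) * ‖v‖) ^ 2 ≤ ‖toEuclideanLin A v‖ ^ 2 :=
      calc ((1 - ε) * ‖v‖) ^ 2 ≤ (1 - ε) * ‖v‖ ^ 2 := by
            nlinarith [mul_nonneg (mul_nonneg hε (sub_nonneg.2 hε1)) (sq_nonneg ‖v‖)]
        _ ≤ ‖v‖ ^ 2 - sMax (Aᵀ * A - 1) * ‖v‖ ^ 2 := by
            nlinarith [mul_le_mul_of_nonneg_right h (sq_nonneg ‖v‖)]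
        _ ≤ ‖toEuclideanLin A v‖ ^ 2 := by
            linarith [(abs_le.mp (abs_norm_sq_sub_norm_sq_le A v)).1]
    exact (pow_le_pow_iff_left₀ (by nlinarith [norm_nonneg v]) (norm_nonneg _) two_ne_zero).mp hsq
  · exact (mul_nonpos_of_nonpos_of_nonneg (by linarith) (norm_nonneg v)).trans (norm_nonneg _)

end NearIsometry

theorem stmt_2_general {t d : ℕ}
    (X : Matrix (Fin t) (Fin d) ℝ) (M : Matrix (Fin d) (Fin d) ℝ)
    (hM : IsUnit M.det) (ε : ℝ) (hε0 : 0 < ε)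
    (h : sMax ((X * M)ᵀ * (X * M) - 1) ≤ max ε (ε ^ 2)) :
    (1 - ε) / sMax M ≤ sMin X ∧ sMax X ≤ (1 + ε) / sMin M :=
  ⟨div_sMax_le_sMin_of_mul_norm_le X hM (one_sub_mul_le_norm_toEuclideanLin hε0.le h),
    sMax_le_div_sMin_of_norm_le X hM (by linarith)
      (norm_toEuclideanLin_le_one_add_mul hε0.le h)⟩

theorem stmt_2 {t d : ℕ} (htd : d ≤ t)
    (X : Matrix (Fin t) (Fin d) ℝ) (M : Matrix (Fin d) (Fin d) ℝ)
    (hM : IsUnit M.det) (ε : ℝ) (hε0 : 0 < ε) (hε1 : ε < 1)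
    (h : sMax ((X * M)ᵀ * (X * M) - 1) ≤ max ε (ε ^ 2)) :
    (1 - ε) / sMax M ≤ sMin X ∧ sMax X ≤ (1 + ε) / sMin M :=
  stmt_2_general X M hM ε hε0 h
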